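/- Let (T, η, μ) be a monad on a category C and let (L, l) be a localization on C. If there is a localization L' on the Eilenberg–Moore category C^T such that L ∘ U is naturally isomorphic to U ∘ L' (U the forgetful functor), then U preserves and reflects local objects and preserves and reflects equivalences (with respect to L' and L), and T preserves L-equivalences. -/

import Mathlib

open CategoryTheory

/-- A localization (reflection) on a category `C`: a functor `L : C ⥤ C` with a natural
transformation `l : 𝟭 C ⟶ L` such that `L (l X) = l (L X)` and these morphisms are
isomorphisms. -/
structure LocalizationData (C : Type*) [Category C] where
  /-- the localization functor -/
  L : C ⥤ C
  /-- the unit -/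
  l : 𝟭 C ⟶ L
  coincide : ∀ X : C, L.map (l.app X) = l.app (L.obj X)
  isIso : ∀ X : C, IsIso (L.map (l.app X))

/-- An object `X` is `L`-local if `l X : X ⟶ L X` is an isomorphism. -/
def LocalizationData.IsLocal {C : Type*} [Category C] (Λ : LocalizationData C) (X : C) : Prop :=
  IsIso (Λ.l.app X)

/-- A morphism `g` is an `L`-equivalence if `L g` is an isomorphism. -/
def LocalizationData.IsEquiv {C : Type*} [Category C] (Λ : LocalizationData C)
    {X Y : C} (g : X ⟶ Y) : Prop :=
  IsIso (Λ.L.map g)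

/-! Since `L ∘ U ≅ U ∘ L'` and `U` reflects isomorphisms, `L' g` is invertible iff `L (U g)`
is. For an algebra `A`, `U (l' A)` is then an `L`-equivalence into `U (L' A) ≅ L (U A)`, which is
`L`-local; an `L`-equivalence between local objects is invertible, so `A` is `L'`-local iff `U A`
is `L`-local. Finally, `g` is an `L`-equivalence iff precomposition with `g` is bijective on maps
into local objects; along the free–forgetful adjunction this transposes to the same property of
`F g`, because `U` preserves local objects, and `T g = U (F g)`. -/

lemma CategoryTheory.isIso_of_bijective_precomp {C : Type*} [Category C] {A B : C} (f : A ⟶ B)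
    (hA : Function.Surjective (fun h : B ⟶ A => f ≫ h))
    (hB : Function.Injective (fun h : B ⟶ B => f ≫ h)) : IsIso f := by
  obtain ⟨s, hs⟩ := hA (𝟙 A)
  refine ⟨s, hs, hB ?_⟩
  simp only [reassoc_of% hs, Category.comp_id]

lemma CategoryTheory.bijective_precomp_of_isIso {C : Type*} [Category C] {A B : C} (f : A ⟶ B)
    [IsIso f] (Z : C) : Function.Bijective (fun h : B ⟶ Z => f ≫ h) :=
  ⟨fun _ _ h => (cancel_epi f).1 h, fun h => ⟨inv f ≫ h, by simp⟩⟩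

namespace LocalizationData

variable {C : Type*} [Category C] (Λ : LocalizationData C)

lemma isLocal_obj_L (X : C) : Λ.IsLocal (Λ.L.obj X) := by
  rw [IsLocal, ← Λ.coincide X]
  exact Λ.isIso X

lemma isLocal_of_iso {X Y : C} (e : X ≅ Y) (hY : Λ.IsLocal Y) : Λ.IsLocal X :=
  (NatTrans.isIso_app_iff_of_iso Λ.l e).2 hY

lemma isIso_of_isEquiv_of_isLocal {X Y : C} (g : X ⟶ Y) (hg : Λ.IsEquiv g)
    (hX : Λ.IsLocal X) (hY : Λ.IsLocal Y) : IsIso g := by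
  have : IsIso (Λ.L.map g) := hg
  have : IsIso (Λ.l.app X) := hX
  have : IsIso (Λ.l.app Y) := hY
  exact IsIso.of_isIso_fac_right (Λ.l.naturality g)

lemma bijective_precomp_l (Y : C) {Z : C} (hZ : Λ.IsLocal Z) :
    Function.Bijective (fun h : Λ.L.obj Y ⟶ Z => Λ.l.app Y ≫ h) := by
  have : IsIso (Λ.l.app Z) := hZ
  refine Function.bijective_iff_has_inverse.2
    ⟨fun f : Y ⟶ Z => Λ.L.map f ≫ inv (Λ.l.app Z), fun h => ?_, fun f => ?_⟩
  · dsimp only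
    rw [Functor.map_comp, Λ.coincide, ← Λ.l.naturality, Functor.id_map, Category.assoc,
      IsIso.hom_inv_id, Category.comp_id]
  · exact (Λ.l.naturality_assoc f _).symm.trans (by simp)

lemma bijective_precomp_iff {X Y Z : C} (g : X ⟶ Y) (hZ : Λ.IsLocal Z) :
    Function.Bijective (fun h : Y ⟶ Z => g ≫ h) ↔
      Function.Bijective (fun h : Λ.L.obj Y ⟶ Z => Λ.L.map g ≫ h) := by
  have square : (fun h : Y ⟶ Z => g ≫ h) ∘ (fun h : Λ.L.obj Y ⟶ Z => Λ.l.app Y ≫ h) =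
      (fun h : Λ.L.obj X ⟶ Z => Λ.l.app X ≫ h) ∘ (fun h => Λ.L.map g ≫ h) := by
    funext h
    exact Λ.l.naturality_assoc g h
  rw [← Function.Bijective.of_comp_iff _ (Λ.bijective_precomp_l Y hZ), square,
    Function.Bijective.of_comp_iff' (Λ.bijective_precomp_l X hZ)]

lemma isEquiv_iff_bijective_precomp {X Y : C} (g : X ⟶ Y) :
    Λ.IsEquiv g ↔ ∀ Z, Λ.IsLocal Z → Function.Bijective (fun h : Y ⟶ Z => g ≫ h) := by
  refine ⟨fun hg Z hZ => ?_, fun h => ?_⟩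
  · have : IsIso (Λ.L.map g) := hg
    exact (Λ.bijective_precomp_iff g hZ).2 (bijective_precomp_of_isIso _ Z)
  · have hL : ∀ W, (Function.Bijective fun k : Λ.L.obj Y ⟶ Λ.L.obj W => Λ.L.map g ≫ k) :=
      fun W => (Λ.bijective_precomp_iff g (Λ.isLocal_obj_L W)).1 (h _ (Λ.isLocal_obj_L W))
    exact isIso_of_bijective_precomp _ (hL X).2 (hL Y).1

lemma isEquiv_map_of_adjunction {D : Type*} [Category D] (Λ' : LocalizationData D)
    {F : C ⥤ D} {G : D ⥤ C} (adj : F ⊣ G) (hG : ∀ B, Λ'.IsLocal B → Λ.IsLocal (G.obj B))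
    {X Y : C} (g : X ⟶ Y) (hg : Λ.IsEquiv g) : Λ'.IsEquiv (F.map g) := by
  refine (Λ'.isEquiv_iff_bijective_precomp _).2 fun B hB => ?_
  have transpose : (fun k : F.obj Y ⟶ B => F.map g ≫ k) =
      (adj.homEquiv X B).symm ∘ (fun f => g ≫ f) ∘ adj.homEquiv Y B := by
    funext k
    simp only [Function.comp_apply, adj.homEquiv_naturality_left_symm, Equiv.symm_apply_apply]
  rw [transpose]
  exact (adj.homEquiv X B).symm.bijective.comp
    (((Λ.isEquiv_iff_bijective_precomp g).1 hg _ (hG B hB)).comp (adj.homEquiv Y B).bijective)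

section Transfer

variable {D : Type*} [Category D] {Λ} (Λ' : LocalizationData D) {U : D ⥤ C}
  [U.ReflectsIsomorphisms] (e : U ⋙ Λ.L ≅ Λ'.L ⋙ U)
include e

lemma isEquiv_iff_isEquiv_map ⦃A B : D⦄ (g : A ⟶ B) :
    Λ'.IsEquiv g ↔ Λ.IsEquiv (U.map g) :=
  (isIso_iff_of_reflects_iso (Λ'.L.map g) U).symm.trans (NatIso.isIso_map_iff e g).symm

lemma isLocal_iff_isLocal_obj (A : D) : Λ'.IsLocal A ↔ Λ.IsLocal (U.obj A) := by
  have hLA : Λ.IsLocal (U.obj (Λ'.L.obj A)) :=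
    Λ.isLocal_of_iso (e.app A).symm (Λ.isLocal_obj_L _)
  refine ⟨fun hA => ?_, fun hA => ?_⟩
  · have : IsIso (Λ'.l.app A) := hA
    exact Λ.isLocal_of_iso (U.mapIso (asIso (Λ'.l.app A))) hLA
  · have hequiv : Λ.IsEquiv (U.map (Λ'.l.app A)) :=
      (isEquiv_iff_isEquiv_map Λ' e _).1 (Λ'.isIso A)
    have := Λ.isIso_of_isEquiv_of_isLocal _ hequiv hA hLA
    exact isIso_of_reflects_iso (Λ'.l.app A) U

end Transfer

end LocalizationData

/-- If a localization `L'` on the Eilenberg–Moore category `C^T` satisfies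
`L ∘ U ≅ U ∘ L'`, then the forgetful functor preserves and reflects local objects and
equivalences, and `T` preserves `L`-equivalences. -/
theorem forget_preserves_reflects_of_localization_iso
    {C : Type*} [Category C] (T : Monad C) (Λ : LocalizationData C)
    (Λ' : LocalizationData (Monad.Algebra T))
    (e : T.forget ⋙ Λ.L ≅ Λ'.L ⋙ T.forget) :
    (∀ A : Monad.Algebra T, Λ'.IsLocal A ↔ Λ.IsLocal (T.forget.obj A)) ∧
    (∀ ⦃A B : Monad.Algebra T⦄ (g : A ⟶ B),
      Λ'.IsEquiv g ↔ Λ.IsEquiv (T.forget.map g)) ∧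
    (∀ ⦃X Y : C⦄ (g : X ⟶ Y), Λ.IsEquiv g → Λ.IsEquiv (T.map g)) := by
  have local_iff := LocalizationData.isLocal_iff_isLocal_obj Λ' e
  have equiv_iff := LocalizationData.isEquiv_iff_isEquiv_map Λ' e
  refine ⟨local_iff, equiv_iff, fun X Y g hg => ?_⟩
  have hfree : Λ'.IsEquiv (T.free.map g) :=
    Λ.isEquiv_map_of_adjunction Λ' T.adj (fun B hB => (local_iff B).1 hB) g hg
  exact (equiv_iff (T.free.map g)).1 hfree
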